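/- arXiv:1910.10412 — 2 statements merged into one kernel-verified Lean document; each statement's English description precedes it below -/
import Mathlib

section
/- If G is a finite connected Helly graph, then for every vertex v, e(v) = dist(v, C(G)) + rad(G), where dist(v, C(G)) = min_{c ∈ C(G)} dist(v,c). -/
/-!
The inequality `e(v) ≤ d(v, c) + rad(G)` holds for every central vertex `c` by the triangle
inequality. Conversely, the ball of radius `e(v) - rad(G)` around `v` meets every ball of radius
`rad(G)`, and these balls meet pairwise (at any central vertex); by the Helly property they have a
common vertex, which has eccentricity at most `rad(G)` and is within `e(v) - rad(G)` of `v`.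
-/

open SimpleGraph

variable {V : Type*}

/-- The ball of radius `r` centered at `v`. -/
def gBall (G : SimpleGraph V) (v : V) (r : ℕ) : Set V := {u | G.dist v u ≤ r}

/-- A graph is Helly if every (nonempty) family of pairwise intersecting balls
has a nonempty common intersection. -/
def IsHelly (G : SimpleGraph V) : Prop :=
  ∀ F : Set (V × ℕ), F.Nonempty →
    (∀ p ∈ F, ∀ q ∈ F, (gBall G p.1 p.2 ∩ gBall G q.1 q.2).Nonempty) →
    (⋂ p ∈ F, gBall G p.1 p.2).Nonempty

/-- The eccentricity of a vertex. -/
noncomputable def ecc (G : SimpleGraph V) [Fintype V] (v : V) : ℕ :=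
  Finset.univ.sup (fun u => G.dist v u)

/-- The radius of a graph. -/
noncomputable def grad (G : SimpleGraph V) [Fintype V] : ℕ :=
  sInf (Set.range (ecc G))

/-- The diameter of a graph. -/
noncomputable def gdiam (G : SimpleGraph V) [Fintype V] : ℕ :=
  Finset.univ.sup (ecc G)

/-- The center of a graph: vertices of minimum eccentricity. -/
noncomputable def gcenter (G : SimpleGraph V) [Fintype V] : Set V :=
  {v | ecc G v = grad G}

/-- Distance from a vertex to a set of vertices. -/
noncomputable def distS (G : SimpleGraph V) (v : V) (S : Set V) : ℕ :=
  sInf (G.dist v '' S)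

/-- The metric projection of a vertex onto a set of vertices. -/
noncomputable def proj (G : SimpleGraph V) (v : V) (S : Set V) : Set V :=
  {s ∈ S | G.dist v s = distS G v S}

/-- The slice `L(u,k,v)`: vertices on the metric interval from `u` to `v`
at distance `k` from `u`. -/
def gslice (G : SimpleGraph V) (u : V) (k : ℕ) (v : V) : Set V :=
  {w | G.dist u w = k ∧ G.dist u w + G.dist w v = G.dist u v}

/-- A graph is `C₄`-free if it has no induced cycle on four vertices. -/
def C4Free (G : SimpleGraph V) : Prop :=
  ¬ ∃ a b c d : V, a ≠ b ∧ a ≠ c ∧ a ≠ d ∧ b ≠ c ∧ b ≠ d ∧ c ≠ d ∧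
    G.Adj a b ∧ G.Adj b c ∧ G.Adj c d ∧ G.Adj d a ∧ ¬ G.Adj a c ∧ ¬ G.Adj b d

/-- The open neighbourhood of a set: vertices outside it with a neighbour in it. -/
def nbhdSet (G : SimpleGraph V) (C : Set V) : Set V :=
  {v | v ∉ C ∧ ∃ c ∈ C, G.Adj v c}

section Distance

variable {G : SimpleGraph V}

lemma gBall_inter_nonempty_iff (hconn : G.Connected) {u w : V} {r s : ℕ} :
    (gBall G u r ∩ gBall G w s).Nonempty ↔ G.dist u w ≤ r + s := by
  constructor
  · rintro ⟨x, hux, hwx⟩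
    have hwx' : G.dist x w ≤ s := SimpleGraph.dist_comm (G := G) ▸ hwx
    exact (hconn.dist_triangle (v := x)).trans (add_le_add hux hwx')
  · intro h
    obtain ⟨p, hp⟩ := hconn.exists_walk_length_eq_dist u w
    refine ⟨p.getVert r, ?_, ?_⟩
    · have hprefix := dist_le (p.take r)
      simp only [Walk.take_length] at hprefix
      exact hprefix.trans (min_le_left _ _)
    · have hsuffix := dist_le (p.drop r)
      rw [Walk.drop_length, SimpleGraph.dist_comm] at hsuffix
      change G.dist w (p.getVert r) ≤ s
      omega

lemma distS_le_dist {S : Set V} {v c : V} (hc : c ∈ S) : distS G v S ≤ G.dist v c :=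
  Nat.sInf_le (Set.mem_image_of_mem _ hc)

lemma exists_dist_eq_distS {S : Set V} (hS : S.Nonempty) (v : V) :
    ∃ c ∈ S, G.dist v c = distS G v S :=
  Nat.sInf_mem (hS.image (G.dist v))

end Distance

section Eccentricity

variable {G : SimpleGraph V} [Fintype V]

lemma dist_le_ecc (u w : V) : G.dist u w ≤ ecc G u :=
  Finset.le_sup (Finset.mem_univ w)

lemma ecc_le_iff {u : V} {r : ℕ} : ecc G u ≤ r ↔ ∀ w, G.dist u w ≤ r := by
  simp [ecc]

lemma ecc_le_iff_forall_mem_gBall {c : V} {r : ℕ} : ecc G c ≤ r ↔ ∀ u, c ∈ gBall G u r := by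
  simp only [ecc_le_iff, gBall, Set.mem_ofPred_eq, SimpleGraph.dist_comm]

lemma grad_le_ecc (u : V) : grad G ≤ ecc G u :=
  Nat.sInf_le ⟨u, rfl⟩

lemma gcenter_nonempty [Nonempty V] : (gcenter G).Nonempty :=
  Nat.sInf_mem (Set.range_nonempty (ecc G))

lemma ecc_le_dist_add_ecc (hconn : G.Connected) (v c : V) :
    ecc G v ≤ G.dist v c + ecc G c :=
  ecc_le_iff.2 fun u => hconn.dist_triangle.trans (add_le_add_right (dist_le_ecc c u) _)

lemma ecc_le_distS_gcenter_add_grad (hconn : G.Connected) (v : V) :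
    ecc G v ≤ distS G v (gcenter G) + grad G := by
  have : Nonempty V := ⟨v⟩
  obtain ⟨c, hc, hvc⟩ := exists_dist_eq_distS (G := G) gcenter_nonempty v
  calc ecc G v ≤ G.dist v c + ecc G c := ecc_le_dist_add_ecc hconn v c
    _ = distS G v (gcenter G) + grad G := by rw [hvc, hc]

lemma IsHelly.exists_mem_gcenter_dist_le (hconn : G.Connected) (hH : IsHelly G) (v : V) :
    ∃ c ∈ gcenter G, G.dist v c ≤ ecc G v - grad G := by
  have : Nonempty V := ⟨v⟩
  obtain ⟨c₀, hc₀⟩ := gcenter_nonempty (G := G)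
  have hc₀_mem : ∀ u, c₀ ∈ gBall G u (grad G) := ecc_le_iff_forall_mem_gBall.1 hc₀.le
  let F : Set (V × ℕ) := insert (v, ecc G v - grad G) (Set.range fun u => (u, grad G))
  have hballs : ∀ u, (gBall G v (ecc G v - grad G) ∩ gBall G u (grad G)).Nonempty := fun u =>
    (gBall_inter_nonempty_iff hconn).2 (by have := dist_le_ecc (G := G) v u; omega)
  have hpairwise : ∀ p ∈ F, ∀ q ∈ F, (gBall G p.1 p.2 ∩ gBall G q.1 q.2).Nonempty := by
    rintro p (rfl | ⟨a, rfl⟩) q (rfl | ⟨b, rfl⟩)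
    · exact (gBall_inter_nonempty_iff hconn).2 (by simp)
    · exact hballs b
    · exact Set.inter_comm _ _ ▸ hballs a
    · exact ⟨c₀, hc₀_mem a, hc₀_mem b⟩
  obtain ⟨x, hx⟩ := hH F ⟨_, Set.mem_insert _ _⟩ hpairwise
  simp only [Set.mem_iInter] at hx
  have hxe : ecc G x ≤ grad G :=
    ecc_le_iff_forall_mem_gBall.2 fun u => hx (u, grad G) (Set.mem_insert_of_mem _ ⟨u, rfl⟩)
  exact ⟨x, le_antisymm hxe (grad_le_ecc x), hx _ (Set.mem_insert _ _)⟩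

end Eccentricity

/-- In a finite connected Helly graph, for every vertex `v`,
`e(v) = dist(v, C(G)) + rad(G)`. -/
theorem stmt2 (G : SimpleGraph V) [Fintype V] (hconn : G.Connected) (hH : IsHelly G)
    (v : V) :
    ecc G v = distS G v (gcenter G) + grad G := by
  obtain ⟨c, hc, hvc⟩ := hH.exists_mem_gcenter_dist_le hconn v
  have hdist := distS_le_dist (G := G) (v := v) hc
  have hupper := ecc_le_distS_gcenter_add_grad hconn v
  have hrad := grad_le_ecc (G := G) v
  omega
end

section
/- For every pair of vertices v and u of a finite connected C4-free Helly graph G and every integer k with 0 ≤ k ≤ dist(u,v), the slice L(u,k,v) is a clique, i.e., any two distinct vertices of L(u,k,v) are adjacent. -/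
open SimpleGraph

variable {V : Type*}

/-! Let `x ≠ y` lie in `L(u,k,v)` at distance `m ≥ 2`. The Helly property applied to `N[x]`,
`N^{m-1}[y]` and `N^{k-1}[u]` gives a step `z` from `x` towards both `y` and `u`; symmetrically
there is a step `w` from `x` towards `y` and `v`. Since `z` is one level below the slice and `w`
one level above it, `dist z w ≥ 2`.

If `m = 2`, then `z` and `w` are non-adjacent common neighbours of the non-adjacent `x` and `y`,
an induced `C₄`. If `m ≥ 3`, a third application of the Helly property, to `N[z]`, `N[w]` and
`N^{m-2}[y]`, yields a vertex `t` of the slice with `dist x t ≤ 2` and `dist t y ≤ m - 2`; by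
strong induction on `m` both distances are at most `1`, so `m ≤ 2`, a contradiction. -/

section

variable {G : SimpleGraph V}

theorem SimpleGraph.Connected.exists_dist_le_dist_le (hconn : G.Connected) {a b : V} {r s : ℕ}
    (h : G.dist a b ≤ r + s) : ∃ p, G.dist a p ≤ r ∧ G.dist b p ≤ s := by
  obtain ⟨w, hw⟩ := hconn.exists_walk_length_eq_dist a b
  refine ⟨w.getVert r, (dist_le (w.take r)).trans ?_, ?_⟩
  · rw [Walk.take_length]
    exact min_le_left _ _
  · rw [dist_comm]
    refine (dist_le (w.drop r)).trans ?_
    rw [Walk.drop_length]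
    omega

theorem SimpleGraph.Connected.adj_of_dist_le_one (hconn : G.Connected) {x y : V}
    (h : G.dist x y ≤ 1) (hne : x ≠ y) : G.Adj x y := by
  have := hconn.pos_dist_of_ne hne
  exact dist_eq_one_iff_adj.mp (by omega)

theorem C4Free.adj_of_common_neighbors (hC4 : C4Free G) {x y z w : V} (hxy : x ≠ y)
    (hnxy : ¬ G.Adj x y) (hxz : G.Adj x z) (hyz : G.Adj y z) (hxw : G.Adj x w)
    (hyw : G.Adj y w) (hzw : z ≠ w) : G.Adj z w := by
  by_contra hnzw
  exact hC4 ⟨x, z, y, w, hxz.ne, hxy, hxw.ne, hyz.ne.symm, hzw, hyw.ne,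
    hxz, hyz.symm, hyw, hxw.symm, hnxy, hnzw⟩

theorem gBall_inter_nonempty (hconn : G.Connected) {a b : V} {r s : ℕ}
    (h : G.dist a b ≤ r + s) : (gBall G a r ∩ gBall G b s).Nonempty :=
  hconn.exists_dist_le_dist_le h

theorem IsHelly.exists_dist_le_three (hH : IsHelly G) (hconn : G.Connected) {a b c : V}
    {ra rb rc : ℕ} (hab : G.dist a b ≤ ra + rb) (hac : G.dist a c ≤ ra + rc)
    (hbc : G.dist b c ≤ rb + rc) :
    ∃ p, G.dist a p ≤ ra ∧ G.dist b p ≤ rb ∧ G.dist c p ≤ rc := by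
  let F : Set (V × ℕ) := {(a, ra), (b, rb), (c, rc)}
  have hF : ∀ p ∈ F, ∀ q ∈ F, G.dist p.1 q.1 ≤ p.2 + q.2 := by
    simp only [F, Set.mem_insert_iff, Set.mem_singleton_iff]
    rintro p (rfl | rfl | rfl) q (rfl | rfl | rfl) <;> simp only [dist_self, dist_comm] <;> omega
  obtain ⟨p, hp⟩ := hH F ⟨_, Set.mem_insert _ _⟩
    fun p hp q hq ↦ gBall_inter_nonempty hconn (hF p hp q hq)
  simp only [F, Set.mem_iInter] at hp
  exact ⟨p, hp (a, ra) (by simp), hp (b, rb) (by simp), hp (c, rc) (by simp)⟩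

theorem IsHelly.exists_step_toward (hH : IsHelly G) (hconn : G.Connected) {u x y : V}
    (hxy : 2 ≤ G.dist x y) (hu : G.dist u x = G.dist u y) :
    ∃ z, G.dist x z ≤ 1 ∧ G.dist y z + 1 ≤ G.dist x y ∧ G.dist u z + 1 ≤ G.dist u x := by
  have hxuy := hconn.dist_triangle (u := x) (v := u) (w := y)
  rw [SimpleGraph.dist_comm (u := x) (v := u)] at hxuy
  obtain ⟨z, hxz, hyz, huz⟩ := hH.exists_dist_le_three hconn (a := x) (b := y) (c := u)
    (ra := 1) (rb := G.dist x y - 1) (rc := G.dist u x - 1)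
    (by omega) (by rw [SimpleGraph.dist_comm (u := x) (v := u)]; omega)
    (by rw [SimpleGraph.dist_comm (u := y) (v := u)]; omega)
  exact ⟨z, hxz, by omega, by omega⟩

theorem IsHelly.dist_ne_two_of_mem_gslice (hH : IsHelly G) (hconn : G.Connected)
    (hC4 : C4Free G) {u v x y : V} {k : ℕ} (hx : x ∈ gslice G u k v) (hy : y ∈ gslice G u k v) :
    G.dist x y ≠ 2 := by
  obtain ⟨hux, hxv⟩ := hx
  obtain ⟨huy, hyv⟩ := hy
  intro hxy
  obtain ⟨z, hxz, hyz, huz⟩ := hH.exists_step_toward hconn hxy.ge (hux.trans huy.symm)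
  obtain ⟨w, hxw, hyw, hvw⟩ := hH.exists_step_toward hconn (u := v) hxy.ge
    (by rw [SimpleGraph.dist_comm, SimpleGraph.dist_comm (u := v)]; omega)
  have hzw : 2 ≤ G.dist z w := by
    have := hconn.dist_triangle (u := u) (v := w) (w := v)
    have := hconn.dist_triangle (u := u) (v := z) (w := w)
    rw [SimpleGraph.dist_comm (u := w) (v := v), SimpleGraph.dist_comm (u := v) (v := x)] at *
    omega
  have hadj := hC4.adj_of_common_neighbors (x := x) (y := y) (z := z) (w := w)
    (by rintro rfl; simp at hxy) (fun h ↦ by simp [dist_eq_one_iff_adj.mpr h] at hxy)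
    (hconn.adj_of_dist_le_one hxz (by rintro rfl; omega))
    (hconn.adj_of_dist_le_one (by omega) (by rintro rfl; omega))
    (hconn.adj_of_dist_le_one hxw (by rintro rfl; omega))
    (hconn.adj_of_dist_le_one (by omega) (by rintro rfl; omega))
    (by rintro rfl; simp at hzw)
  rw [← dist_eq_one_iff_adj] at hadj
  omega

theorem IsHelly.exists_mem_gslice_near (hH : IsHelly G) (hconn : G.Connected) {u v x y : V}
    {k : ℕ} (hx : x ∈ gslice G u k v) (hy : y ∈ gslice G u k v) (hxy : 2 ≤ G.dist x y) :
    ∃ t ∈ gslice G u k v, G.dist x t ≤ 2 ∧ G.dist t y + 2 ≤ G.dist x y := by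
  obtain ⟨hux, hxv⟩ := hx
  obtain ⟨huy, hyv⟩ := hy
  obtain ⟨z, hxz, hyz, huz⟩ := hH.exists_step_toward hconn hxy (hux.trans huy.symm)
  obtain ⟨w, hxw, hyw, hvw⟩ := hH.exists_step_toward hconn (u := v) hxy
    (by rw [SimpleGraph.dist_comm, SimpleGraph.dist_comm (u := v)]; omega)
  obtain ⟨t, hzt, hwt, hyt⟩ := hH.exists_dist_le_three hconn (a := z) (b := w) (c := y)
    (ra := 1) (rb := 1) (rc := G.dist x y - 2)
    (by have := hconn.dist_triangle (u := z) (v := x) (w := w)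
        rw [SimpleGraph.dist_comm (u := z) (v := x)] at this; omega)
    (by rw [SimpleGraph.dist_comm]; omega) (by rw [SimpleGraph.dist_comm]; omega)
  have := hconn.dist_triangle (u := u) (v := z) (w := t)
  have := hconn.dist_triangle (u := u) (v := t) (w := v)
  have := hconn.dist_triangle (u := t) (v := w) (w := v)
  have := hconn.dist_triangle (u := x) (v := z) (w := t)
  rw [SimpleGraph.dist_comm (u := w) (v := v), SimpleGraph.dist_comm (u := v) (v := x),
    SimpleGraph.dist_comm (u := t) (v := w), SimpleGraph.dist_comm (u := y) (v := t)] at *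
  refine ⟨t, ⟨?_, ?_⟩, ?_, ?_⟩ <;> omega

theorem IsHelly.dist_le_one_of_mem_gslice (hH : IsHelly G) (hconn : G.Connected) (hC4 : C4Free G)
    {u v x y : V} {k : ℕ} (hx : x ∈ gslice G u k v) (hy : y ∈ gslice G u k v) :
    G.dist x y ≤ 1 := by
  induction hn : G.dist x y using Nat.strong_induction_on generalizing x y with
  | _ n ih =>
    by_contra! h
    have hn2 := hH.dist_ne_two_of_mem_gslice hconn hC4 hx hy
    obtain ⟨t, ht, hxt, hty⟩ := hH.exists_mem_gslice_near hconn hx hy (by omega)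
    have := ih _ (by omega) hx ht rfl
    have := ih _ (by omega) ht hy rfl
    have := hconn.dist_triangle (u := x) (v := t) (w := y)
    omega

end

theorem stmt4_general (G : SimpleGraph V) (hconn : G.Connected) (hH : IsHelly G)
    (hC4 : C4Free G) (u v : V) (k : ℕ) :
    G.IsClique (gslice G u k v) := fun _ hx _ hy hne ↦
  hconn.adj_of_dist_le_one (hH.dist_le_one_of_mem_gslice hconn hC4 hx hy) hne

/-- In a finite connected C4-free Helly graph, every slice
`L(u,k,v)` with `0 ≤ k ≤ dist(u,v)` is a clique. -/
theorem stmt4 (G : SimpleGraph V) [Fintype V] (hconn : G.Connected) (hH : IsHelly G)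
    (hC4 : C4Free G) (u v : V) (k : ℕ) (hk : k ≤ G.dist u v) :
    G.IsClique (gslice G u k v) :=
  stmt4_general G hconn hH hC4 u v k
end
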